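/- Let m be a positive integer and c ≥ 0 a real. For each binary string S of length at most m − 1 let p_S ∈ (0, 1], and define χ over binary strings of length at most m recursively by χ_∅ = 1 and χ_{S0} = χ_{S1} = p_S · χ_S. Suppose q_S ≥ 0 is given for each binary string S of length at most m, satisfying q_{S0} + q_{S1} ≤ (1/p_S) · ( q_S + c · H(p_S) ) for every string S of length at most m − 1. Then Σ_{S : |S| = m} χ_S · q_S ≤ q_∅ + c · Σ_{k=0}^{m−1} Σ_{S : |S| = k} H(p_S). -/

import Mathlib

/-
Weight each string `S` by `χ_S`. Multiplying the hypothesis at `S` by `p_S·χ_S = χ_{S0} = χ_{S1}`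
gives `χ_{S0} q_{S0} + χ_{S1} q_{S1} ≤ χ_S q_S + χ_S c H(p_S) ≤ χ_S q_S + c H(p_S)`, because
`0 ≤ χ_S ≤ 1`. Summing over all strings of length `k` bounds the weighted level sum at depth
`k + 1` by the one at depth `k` plus `c·Σ_{|S| = k} H(p_S)`; telescoping from the root gives
the claim.
-/

/-- The binary entropy function, `H(p) = p·log₂(1/p) + (1−p)·log₂(1/(1−p))`,
with `H 0 = H 1 = 0` under the conventions of `Real.logb`. -/
noncomputable def binEnt (p : ℝ) : ℝ :=
  p * Real.logb 2 (1 / p) + (1 - p) * Real.logb 2 (1 / (1 - p))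

theorem binEnt_eq_binEntropy_div_log_two (p : ℝ) :
    binEnt p = Real.binEntropy p / Real.log 2 := by
  simp only [binEnt, Real.binEntropy, Real.logb, one_div]
  ring

theorem binEnt_nonneg {p : ℝ} (hp₀ : 0 ≤ p) (hp₁ : p ≤ 1) : 0 ≤ binEnt p := by
  rw [binEnt_eq_binEntropy_div_log_two]
  exact div_nonneg (Real.binEntropy_nonneg hp₀ hp₁) (Real.log_nonneg one_le_two)

theorem Fintype.sum_ofFn_succ {α M : Type*} [Fintype α] [AddCommMonoid M]
    (f : List α → M) (k : ℕ) :
    ∑ S : Fin (k + 1) → α, f (List.ofFn S) = ∑ T : Fin k → α, ∑ a, f (List.ofFn T ++ [a]) := by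
  rw [← (Fin.snocEquiv fun _ => α).sum_comp, Fintype.sum_prod_type, Finset.sum_comm]
  simp only [Fin.snocEquiv, Equiv.coe_fn_mk, List.ofFn_succ_last, Fin.snoc_castSucc, Fin.snoc_last]

theorem mem_Icc_of_append_singleton_eq_mul {m : ℕ} {p χ : List Bool → ℝ}
    (hp : ∀ S : List Bool, S.length < m → p S ∈ Set.Icc (0 : ℝ) 1)
    (hχnil : χ [] = 1)
    (hχ : ∀ S : List Bool, S.length < m → ∀ b : Bool, χ (S ++ [b]) = p S * χ S)
    (S : List Bool) (hS : S.length ≤ m) : χ S ∈ Set.Icc (0 : ℝ) 1 := by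
  induction S using List.reverseRecOn with
  | nil => simp [hχnil]
  | append_singleton T b ih =>
    have hT : T.length < m := by
      simp only [List.length_append, List.length_singleton] at hS; omega
    obtain ⟨hχ₀, hχ₁⟩ := ih hT.le
    obtain ⟨hp₀, hp₁⟩ := hp T hT
    rw [hχ T hT b]
    exact ⟨mul_nonneg hp₀ hχ₀, mul_le_one₀ hp₁ hχ₀ hχ₁⟩

theorem sum_append_singleton_mul_le {p χ q : List Bool → ℝ} {c : ℝ} (hc : 0 ≤ c) (S : List Bool)
    (hpS : p S ∈ Set.Ioc (0 : ℝ) 1) (hχS : χ S ∈ Set.Icc (0 : ℝ) 1)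
    (hχ : ∀ b : Bool, χ (S ++ [b]) = p S * χ S)
    (hrec : q (S ++ [false]) + q (S ++ [true]) ≤ (1 / p S) * (q S + c * binEnt (p S))) :
    ∑ b : Bool, χ (S ++ [b]) * q (S ++ [b]) ≤ χ S * q S + c * binEnt (p S) := by
  obtain ⟨hp₀, hp₁⟩ := hpS
  obtain ⟨hχ₀, hχ₁⟩ := hχS
  have hH : 0 ≤ c * binEnt (p S) := mul_nonneg hc (binEnt_nonneg hp₀.le hp₁)
  rw [Fintype.sum_bool, hχ true, hχ false]
  calc p S * χ S * q (S ++ [true]) + p S * χ S * q (S ++ [false])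
      = p S * χ S * (q (S ++ [false]) + q (S ++ [true])) := by ring
    _ ≤ p S * χ S * ((1 / p S) * (q S + c * binEnt (p S))) :=
        mul_le_mul_of_nonneg_left hrec (mul_nonneg hp₀.le hχ₀)
    _ = χ S * q S + χ S * (c * binEnt (p S)) := by field_simp
    _ ≤ χ S * q S + c * binEnt (p S) := by
        linarith [mul_le_of_le_one_left hH hχ₁]

theorem sum_ofFn_mul_le_add_sum_binEnt {m : ℕ} {c : ℝ} (hc : 0 ≤ c) {p χ q : List Bool → ℝ}
    (hp : ∀ S : List Bool, S.length < m → p S ∈ Set.Ioc (0 : ℝ) 1)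
    (hχnil : χ [] = 1)
    (hχ : ∀ S : List Bool, S.length < m → ∀ b : Bool, χ (S ++ [b]) = p S * χ S)
    (hrec : ∀ S : List Bool, S.length < m →
      q (S ++ [false]) + q (S ++ [true]) ≤ (1 / p S) * (q S + c * binEnt (p S)))
    (k : ℕ) (hk : k ≤ m) :
    (∑ S : Fin k → Bool, χ (List.ofFn S) * q (List.ofFn S)) ≤
      q [] + c * ∑ j ∈ Finset.range k, ∑ S : Fin j → Bool, binEnt (p (List.ofFn S)) := by
  induction k with
  | zero => simp [hχnil]
  | succ k ih =>
    have hχ_Icc := mem_Icc_of_append_singleton_eq_mul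
      (fun S hS => Set.Ioc_subset_Icc_self (hp S hS)) hχnil hχ
    have hlen : ∀ T : Fin k → Bool, (List.ofFn T).length < m := by
      intro T; rw [List.length_ofFn]; omega
    calc ∑ S : Fin (k + 1) → Bool, χ (List.ofFn S) * q (List.ofFn S)
        = ∑ T : Fin k → Bool, ∑ b, χ (List.ofFn T ++ [b]) * q (List.ofFn T ++ [b]) :=
          Fintype.sum_ofFn_succ (fun S => χ S * q S) k
      _ ≤ ∑ T : Fin k → Bool,
            (χ (List.ofFn T) * q (List.ofFn T) + c * binEnt (p (List.ofFn T))) :=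
          Finset.sum_le_sum fun T _ => sum_append_singleton_mul_le hc _ (hp _ (hlen T))
            (hχ_Icc _ (hlen T).le) (hχ _ (hlen T)) (hrec _ (hlen T))
      _ = ∑ T : Fin k → Bool, χ (List.ofFn T) * q (List.ofFn T)
            + c * ∑ T : Fin k → Bool, binEnt (p (List.ofFn T)) := by
          rw [Finset.sum_add_distrib, Finset.mul_sum]
      _ ≤ q [] + c * ∑ j ∈ Finset.range (k + 1), ∑ S : Fin j → Bool,
            binEnt (p (List.ofFn S)) := by
          rw [Finset.sum_range_succ, mul_add, ← add_assoc]
          gcongr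
          exact ih (by omega)

theorem stmt15_general (m : ℕ) (c : ℝ) (hc : 0 ≤ c)
    (p χ q : List Bool → ℝ)
    (hp : ∀ S : List Bool, S.length < m → p S ∈ Set.Ioc (0 : ℝ) 1)
    (hχnil : χ [] = 1)
    (hχ : ∀ S : List Bool, S.length < m → ∀ b : Bool, χ (S ++ [b]) = p S * χ S)
    (hrec : ∀ S : List Bool, S.length < m →
      q (S ++ [false]) + q (S ++ [true]) ≤ (1 / p S) * (q S + c * binEnt (p S))) :
    (∑ S : Fin m → Bool, χ (List.ofFn S) * q (List.ofFn S)) ≤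
      q [] + c * ∑ k ∈ Finset.range m, ∑ S : Fin k → Bool, binEnt (p (List.ofFn S)) :=
  sum_ofFn_mul_le_add_sum_binEnt hc hp hχnil hχ hrec m le_rfl

/-- **Recursive-decomposition bookkeeping (Lemma on the pattern).**
Binary strings are `List Bool`, with children `S ++ [false]` and `S ++ [true]`; `χ` is the
product of the `p`'s along the ancestors, defined recursively by `χ_∅ = 1` and
`χ_{S0} = χ_{S1} = p_S·χ_S`.  If the nonnegative values `q` satisfy
`q_{S0} + q_{S1} ≤ (1/p_S)·(q_S + c·H(p_S))` for all strings `S` of length `< m`, then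
`Σ_{|S| = m} χ_S·q_S ≤ q_∅ + c·Σ_{k<m} Σ_{|S| = k} H(p_S)`. -/
theorem stmt15 (m : ℕ) (hm : 0 < m) (c : ℝ) (hc : 0 ≤ c)
    (p χ q : List Bool → ℝ)
    (hp : ∀ S : List Bool, S.length < m → p S ∈ Set.Ioc (0 : ℝ) 1)
    (hχnil : χ [] = 1)
    (hχ : ∀ S : List Bool, S.length < m → ∀ b : Bool, χ (S ++ [b]) = p S * χ S)
    (hq : ∀ S : List Bool, S.length ≤ m → 0 ≤ q S)
    (hrec : ∀ S : List Bool, S.length < m →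
      q (S ++ [false]) + q (S ++ [true]) ≤ (1 / p S) * (q S + c * binEnt (p S))) :
    (∑ S : Fin m → Bool, χ (List.ofFn S) * q (List.ofFn S)) ≤
      q [] + c * ∑ k ∈ Finset.range m, ∑ S : Fin k → Bool, binEnt (p (List.ofFn S)) :=
  stmt15_general m c hc p χ q hp hχnil hχ hrec
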